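/- Let a bounded and monotonic routing metric be assigned over a finite connected system S with root r. Then for every vertex v ≠ r, μ(v,r) = max^≺_{u∈N_v} met( μ(u,r), wf({u,v}) ), where N_v is the set of neighbors of v. -/
import Mathlib


def MetBounded {M W : Type} [LinearOrder M] (met : M → W → M) : Prop :=
  ∀ m w, met m w ≤ m

def MetMonotonic {M W : Type} [LinearOrder M] (met : M → W → M) : Prop :=
  ∀ m m' w, m ≤ m' → met m w ≤ met m' w

def MetStrictlyDecreasing {M W : Type} [LinearOrder M] (met : M → W → M) : Prop :=
  ∀ m : M, (∀ w, met m w < m) ∨ (∀ w, met m w = m)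

def IsMetFixedPoint {M W : Type} (met : M → W → M) (m : M) : Prop :=
  ∀ w, met m w = m

/-- The metric value of a walk, computed from its start with initial value `m`. -/
def walkVal {M W V : Type} (met : M → W → M) (wf : V → V → W) {G : SimpleGraph V} :
    {u v : V} → G.Walk u v → M → M
  | _, _, SimpleGraph.Walk.nil, m => m
  | u, _, SimpleGraph.Walk.cons (v := x) _ q, m => walkVal met wf q (met m (wf u x))

/-- `mu v p` is the maximum, over simple paths from `p` to `v`, of the path metric. -/
def IsMaxMetric {M W V : Type} [LinearOrder M] (met : M → W → M) (wf : V → V → W)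
    (G : SimpleGraph V) (mr : M) (mu : V → V → M) : Prop :=
  ∀ v p : V,
    (∃ q : G.Walk p v, q.IsPath ∧ walkVal met wf q mr = mu v p) ∧
    (∀ q : G.Walk p v, q.IsPath → walkVal met wf q mr ≤ mu v p)

section Aux

variable {M W V : Type} [LinearOrder M] (met : M → W → M) (wf : V → V → W)
  {G : SimpleGraph V}

theorem walkVal_append {u v x : V} (p : G.Walk u v) (q : G.Walk v x) (m : M) :
    walkVal met wf (p.append q) m = walkVal met wf q (walkVal met wf p m) := by
  induction p generalizing m with
  | nil => rfl
  | cons h p ih => simp [walkVal, ih]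

theorem walkVal_concat {u v x : V} (p : G.Walk u v) (h : G.Adj v x) (m : M) :
    walkVal met wf (p.concat h) m = met (walkVal met wf p m) (wf v x) := by
  rw [SimpleGraph.Walk.concat_eq_append, walkVal_append]; rfl

theorem walkVal_mono (hmono : MetMonotonic met) {u v : V} (p : G.Walk u v)
    {m m' : M} (h : m ≤ m') : walkVal met wf p m ≤ walkVal met wf p m' := by
  induction p generalizing m m' with
  | nil => exact h
  | cons ha p ih => exact ih (hmono _ _ _ h)

theorem walkVal_le (hbound : MetBounded met) (hmono : MetMonotonic met)
    {u v : V} (p : G.Walk u v) (m : M) : walkVal met wf p m ≤ m := by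
  induction p generalizing m with
  | nil => exact le_rfl
  | cons ha p ih => exact (ih _).trans (hbound _ _)

end Aux

/-- For a bounded monotonic metric assigned over a finite connected
system with root `r`, for every `v ≠ r`:
`μ(v,r) = max_{u ∈ N_v} met(μ(u,r), wf {u,v})`. -/
theorem statement_2 {M W V : Type} [LinearOrder M] [Fintype V]
    (met : M → W → M) (mr : M) (hmr : ∀ m : M, m ≤ mr)
    (hbound : MetBounded met) (hmono : MetMonotonic met)
    (G : SimpleGraph V) (hconn : G.Connected) (r : V)
    (wf : V → V → W) (hwf : ∀ u v : V, wf u v = wf v u)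
    (mu : V → V → M) (hmu : IsMaxMetric met wf G mr mu)
    (v : V) (hv : v ≠ r) :
    IsGreatest {m : M | ∃ u : V, G.Adj u v ∧ met (mu u r) (wf u v) = m} (mu v r) := by
  classical
  -- Upper bound
  have hub : ∀ m ∈ {m : M | ∃ u : V, G.Adj u v ∧ met (mu u r) (wf u v) = m},
      m ≤ mu v r := by
    rintro m ⟨u, hadj, rfl⟩
    obtain ⟨p, hp, hpv⟩ := (hmu u r).1
    by_cases hvin : v ∈ p.support
    · have hpre : (p.takeUntil v hvin).IsPath := hp.takeUntil hvin
      have h1 : walkVal met wf (p.takeUntil v hvin) mr ≤ mu v r :=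
        (hmu v r).2 _ hpre
      have h2 : walkVal met wf p mr ≤ walkVal met wf (p.takeUntil v hvin) mr := by
        conv_lhs => rw [← p.take_spec hvin]
        rw [walkVal_append]
        exact walkVal_le met wf hbound hmono _ _
      calc met (mu u r) (wf u v) ≤ mu u r := hbound _ _
        _ = walkVal met wf p mr := hpv.symm
        _ ≤ _ := h2
        _ ≤ mu v r := h1
    · have hpath : (p.concat hadj).IsPath := by
        rw [← SimpleGraph.Walk.isPath_reverse_iff, SimpleGraph.Walk.reverse_concat,
          SimpleGraph.Walk.cons_isPath_iff]
        exact ⟨hp.reverse, by simpa using hvin⟩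
      have := (hmu v r).2 _ hpath
      rwa [walkVal_concat, hpv] at this
  constructor
  · -- membership
    obtain ⟨q, hq, hqv⟩ := (hmu v r).1
    have hnil : ¬ q.reverse.Nil := by
      intro h
      exact hv h.eq
    obtain ⟨x, hvx, t, ht⟩ := SimpleGraph.Walk.not_nil_iff.mp hnil
    have hqeq : q = t.reverse.concat hvx.symm := by
      rw [← q.reverse_reverse, ht, SimpleGraph.Walk.reverse_cons,
        SimpleGraph.Walk.concat_eq_append]
    have htpath : t.reverse.IsPath := by
      rw [hqeq, SimpleGraph.Walk.concat_eq_append] at hq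
      exact hq.of_append_left
    have hle : walkVal met wf t.reverse mr ≤ mu x r := (hmu x r).2 _ htpath
    have hkey : mu v r ≤ met (mu x r) (wf x v) := by
      rw [← hqv, hqeq, walkVal_concat]
      exact hmono _ _ _ hle
    refine ⟨x, hvx.symm, le_antisymm (hub _ ⟨x, hvx.symm, rfl⟩) hkey⟩
  · exact hub
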